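/- Let α_0, …, α_m be elements of O_K, let p_n, q_n (0 ≤ n ≤ m) be the convergent numerators and denominators of the finite continued fraction [α_0, …, α_m], and set Δ = (p_m − q_{m-1})² + 4·q_m·p_{m-1}. If Δ > 0 and Δ is not the square of an element of K, then the purely periodic continued fraction [overline(α_0, …, α_m)] converges to a real root of q_m·x² − (p_m − q_{m-1})·x − p_{m-1} = 0, and the reversed purely periodic continued fraction [overline(α_m, …, α_0)] also converges to a real number, namely to a root of −p_{m-1}·x² + (p_m − q_{m-1})·x + q_m = 0. -/

import Mathlib

open Filter Topology

/-- Numerator continuants: `cfP a (n+1) = Pₙ`, with `cfP a 0 = P₋₁ = 1`. -/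
def cfP {R : Type*} [CommRing R] (a : ℕ → R) : ℕ → R
  | 0 => 1
  | 1 => a 0
  | n + 2 => a (n + 1) * cfP a (n + 1) + cfP a n

/-- Denominator continuants: `cfQ a (n+1) = Qₙ`, with `cfQ a 0 = Q₋₁ = 0`. -/
def cfQ {R : Type*} [CommRing R] (a : ℕ → R) : ℕ → R
  | 0 => 0
  | 1 => 1
  | n + 2 => a (n + 1) * cfQ a (n + 1) + cfQ a n

/-- The sequence `a` is ultimately periodic. -/
def UltimatelyPeriodic {α : Type*} (a : ℕ → α) : Prop :=
  ∃ N k : ℕ, 1 ≤ k ∧ ∀ n > N, a (n + k) = a n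

/-- The continued fraction `[a₀, a₁, …]` converges to `ξ`:
`Qₙ ≠ 0` for all sufficiently large `n` and `Pₙ/Qₙ → ξ`. -/
def CFConvergesTo (a : ℕ → ℝ) (ξ : ℝ) : Prop :=
  (∃ N, ∀ n ≥ N, cfQ a (n + 1) ≠ 0) ∧
    Tendsto (fun n => cfP a (n + 1) / cfQ a (n + 1)) atTop (nhds ξ)

/-!
One period of the continued fraction acts on `(Pₙ, Qₙ)` by the matrix
`M = !![Pₘ, Pₘ₋₁; Qₘ, Qₘ₋₁]`, of determinant `±1` and with characteristic discriminant `Δ`.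
Its trace is nonzero (otherwise `Δ = ±4`), so its two real eigenvalues have distinct absolute
values, and `Pₙ / Qₙ` converges to the fixed point `x` of the Möbius map of `M` belonging to the
dominant eigenvalue. The argument needs `Pₙ - y Qₙ ≠ 0` for the other fixed point `y`: this holds
because `y ∉ K` (as `Δ` is not a square in `K`) while `Pₙ / Qₙ ∈ K`. Reversing the period
transposes `M`, which swaps `Qₘ` and `Pₘ₋₁` and leaves `Δ` unchanged.
-/

section Continuants

variable {R : Type*} [CommRing R]

@[simp] theorem cfP_zero (a : ℕ → R) : cfP a 0 = 1 := rfl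

@[simp] theorem cfP_one (a : ℕ → R) : cfP a 1 = a 0 := rfl

theorem cfP_add_two (a : ℕ → R) (n : ℕ) :
    cfP a (n + 2) = a (n + 1) * cfP a (n + 1) + cfP a n := rfl

@[simp] theorem cfQ_zero (a : ℕ → R) : cfQ a 0 = 0 := rfl

@[simp] theorem cfQ_one (a : ℕ → R) : cfQ a 1 = 1 := rfl

theorem cfQ_add_two (a : ℕ → R) (n : ℕ) :
    cfQ a (n + 2) = a (n + 1) * cfQ a (n + 1) + cfQ a n := rfl

theorem map_cfP {S : Type*} [CommRing S] (f : R →+* S) (a : ℕ → R) :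
    ∀ n, f (cfP a n) = cfP (fun i => f (a i)) n
  | 0 => map_one f
  | 1 => rfl
  | n + 2 => by simp only [cfP_add_two, map_add, map_mul, map_cfP f a n, map_cfP f a (n + 1)]

theorem map_cfQ {S : Type*} [CommRing S] (f : R →+* S) (a : ℕ → R) :
    ∀ n, f (cfQ a n) = cfQ (fun i => f (a i)) n
  | 0 => map_zero f
  | 1 => map_one f
  | n + 2 => by simp only [cfQ_add_two, map_add, map_mul, map_cfQ f a n, map_cfQ f a (n + 1)]

theorem cfP_mem {S : Type*} [SetLike S R] [SubringClass S R] {s : S} {a : ℕ → R}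
    (ha : ∀ n, a n ∈ s) : ∀ n, cfP a n ∈ s
  | 0 => one_mem s
  | 1 => ha 0
  | n + 2 => add_mem (mul_mem (ha _) (cfP_mem ha (n + 1))) (cfP_mem ha n)

theorem cfQ_mem {S : Type*} [SetLike S R] [SubringClass S R] {s : S} {a : ℕ → R}
    (ha : ∀ n, a n ∈ s) : ∀ n, cfQ a n ∈ s
  | 0 => zero_mem s
  | 1 => one_mem s
  | n + 2 => add_mem (mul_mem (ha _) (cfQ_mem ha (n + 1))) (cfQ_mem ha n)

theorem cfP_succ_mul_cfQ_sub_cfP_mul_cfQ_succ (a : ℕ → R) :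
    ∀ n, cfP a (n + 1) * cfQ a n - cfP a n * cfQ a (n + 1) = (-1) ^ (n + 1)
  | 0 => by simp
  | n + 1 => by
    rw [cfP_add_two, cfQ_add_two]
    linear_combination (-1 : R) * cfP_succ_mul_cfQ_sub_cfP_mul_cfQ_succ a n

theorem cfP_ne_zero_or_cfQ_ne_zero [Nontrivial R] (a : ℕ → R) :
    ∀ n, cfP a n ≠ 0 ∨ cfQ a n ≠ 0
  | 0 => Or.inl one_ne_zero
  | n + 1 => by
    by_contra! h
    have hdet := cfP_succ_mul_cfQ_sub_cfP_mul_cfQ_succ a n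
    rw [h.1, h.2, zero_mul, mul_zero, sub_zero] at hdet
    exact ((isUnit_neg_one (α := R)).pow _).ne_zero hdet.symm

theorem cfP_add_succ (a : ℕ → R) (k : ℕ) : ∀ n, cfP a (n + (k + 1)) =
    cfP a (k + 1) * cfP (fun i => a (i + (k + 1))) n + cfP a k * cfQ (fun i => a (i + (k + 1))) n
  | 0 => by simp
  | 1 => by rw [Nat.add_comm 1, cfP_add_two]; simp only [cfP_one, cfQ_one, zero_add]; ring
  | n + 2 => by
    rw [show n + 2 + (k + 1) = n + (k + 1) + 2 by omega, cfP_add_two, cfP_add_two, cfQ_add_two,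
      show n + (k + 1) + 1 = n + 1 + (k + 1) by omega, cfP_add_succ a k n,
      cfP_add_succ a k (n + 1)]
    ring

theorem cfQ_add_succ (a : ℕ → R) (k : ℕ) : ∀ n, cfQ a (n + (k + 1)) =
    cfQ a (k + 1) * cfP (fun i => a (i + (k + 1))) n + cfQ a k * cfQ (fun i => a (i + (k + 1))) n
  | 0 => by simp
  | 1 => by rw [Nat.add_comm 1, cfQ_add_two]; simp only [cfP_one, cfQ_one, zero_add]; ring
  | n + 2 => by
    rw [show n + 2 + (k + 1) = n + (k + 1) + 2 by omega, cfQ_add_two, cfP_add_two, cfQ_add_two,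
      show n + (k + 1) + 1 = n + 1 + (k + 1) by omega, cfQ_add_succ a k n,
      cfQ_add_succ a k (n + 1)]
    ring

theorem cfQ_succ (a : ℕ → R) (n : ℕ) : cfQ a (n + 1) = cfP (fun i => a (i + 1)) n := by
  simpa using cfQ_add_succ a 0 n

theorem cfP_add_two_eq_left (a : ℕ → R) (n : ℕ) :
    cfP a (n + 2) = a 0 * cfP (fun i => a (i + 1)) (n + 1) + cfP (fun i => a (i + 2)) n := by
  simpa [cfQ_succ, add_assoc] using cfP_add_succ a 0 (n + 1)

theorem cfP_reverse : ∀ (n : ℕ) (a b : ℕ → R), (∀ i < n, b i = a (n - 1 - i)) →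
    cfP b n = cfP a n
  | 0, _, _, _ => rfl
  | 1, _, _, h => h 0 Nat.one_pos
  | n + 2, a, b, h => by
    have h_last : b (n + 1) = a 0 := (h (n + 1) (by omega)).trans (congrArg a (by omega))
    have h_init : cfP b (n + 1) = cfP (fun i => a (i + 1)) (n + 1) :=
      cfP_reverse (n + 1) _ b fun i hi => (h i (by omega)).trans (congrArg a (by omega))
    have h_init' : cfP b n = cfP (fun i => a (i + 2)) n :=
      cfP_reverse n _ b fun i hi => (h i (by omega)).trans (congrArg a (by omega))
    rw [cfP_add_two, cfP_add_two_eq_left, h_last, h_init, h_init']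

theorem cfQ_reverse {a b : ℕ → R} {n : ℕ} (h : ∀ i ≤ n, b i = a (n - i)) :
    cfQ b (n + 1) = cfP a n := by
  rw [cfQ_succ]
  exact cfP_reverse n a _ fun i hi => (h (i + 1) (by omega)).trans (congrArg a (by omega))

theorem continuants_of_reverse {a b : ℕ → R} {m : ℕ} (h : ∀ i ≤ m, b i = a (m - i)) :
    cfP b (m + 1) = cfP a (m + 1) ∧ cfQ b (m + 1) = cfP a m ∧
      cfP b m = cfQ a (m + 1) ∧ cfQ b m = cfQ a m := by
  refine ⟨cfP_reverse _ a b fun i hi => (h i (by omega)).trans (congrArg a (by omega)),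
    cfQ_reverse h, ?_, ?_⟩
  · rw [cfQ_succ]
    exact cfP_reverse m _ b fun i hi => (h i (by omega)).trans (congrArg a (by omega))
  · cases m with
    | zero => rfl
    | succ m =>
      rw [cfQ_succ a]
      exact cfQ_reverse fun i hi => (h i (by omega)).trans (congrArg a (by omega))

variable {a : ℕ → R} {m : ℕ}

theorem cfP_add_period (hper : ∀ n, a (n + (m + 1)) = a n) (n : ℕ) :
    cfP a (n + (m + 1)) = cfP a (m + 1) * cfP a n + cfP a m * cfQ a n := by
  simpa only [hper] using cfP_add_succ a m n

theorem cfQ_add_period (hper : ∀ n, a (n + (m + 1)) = a n) (n : ℕ) :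
    cfQ a (n + (m + 1)) = cfQ a (m + 1) * cfP a n + cfQ a m * cfQ a n := by
  simpa only [hper] using cfQ_add_succ a m n

/-- A root `x` of `Qₘ x² - (Pₘ - Qₘ₋₁) x - Pₘ₋₁` is a fixed point of the Möbius map of one
period, so `(P, Q) ↦ P - x Q` is an eigenvector of its matrix, with eigenvalue `Pₘ - x Qₘ`. -/
theorem cfP_sub_mul_cfQ_add_period (hper : ∀ n, a (n + (m + 1)) = a n) {x : R}
    (hx : cfQ a (m + 1) * x ^ 2 - (cfP a (m + 1) - cfQ a m) * x - cfP a m = 0) (n : ℕ) :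
    cfP a (n + (m + 1)) - x * cfQ a (n + (m + 1)) =
      (cfP a (m + 1) - x * cfQ a (m + 1)) * (cfP a n - x * cfQ a n) := by
  rw [cfP_add_period hper, cfQ_add_period hper]
  linear_combination (-cfQ a n) * hx

theorem cf_discriminant_eq (a : ℕ → R) (m : ℕ) :
    (cfP a (m + 1) - cfQ a m) ^ 2 + 4 * cfQ a (m + 1) * cfP a m =
      (cfP a (m + 1) + cfQ a m) ^ 2 + 4 * (-1) ^ m := by
  linear_combination (-4 : R) * cfP_succ_mul_cfQ_sub_cfP_mul_cfQ_succ a m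

end Continuants

theorem tendsto_zero_of_add_eq_mul {f : ℕ → ℝ} {c : ℝ} {k : ℕ} (hk : k ≠ 0) (hc : |c| < 1)
    (hf : ∀ n, f (n + k) = c * f n) : Tendsto f atTop (𝓝 0) := by
  have hpow : ∀ i j, f (j + k * i) = c ^ i * f j := by
    intro i j
    induction i with
    | zero => simp
    | succ i ih => rw [mul_add_one, ← add_assoc, hf, ih, pow_succ']; ring
  have hbound : ∀ n, ‖f n‖ ≤ (∑ j ∈ Finset.range k, |f j|) * |c| ^ (n / k) := by
    intro n
    have hmod : n % k ∈ Finset.range k :=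
      Finset.mem_range.2 (Nat.mod_lt n (Nat.pos_of_ne_zero hk))
    calc ‖f n‖ = |c| ^ (n / k) * |f (n % k)| := by
          rw [Real.norm_eq_abs, ← abs_pow, ← abs_mul, ← hpow, Nat.mod_add_div]
      _ ≤ |c| ^ (n / k) * ∑ j ∈ Finset.range k, |f j| := by
          gcongr
          exact Finset.single_le_sum (fun j _ => abs_nonneg (f j)) hmod
      _ = _ := mul_comm _ _
  refine squeeze_zero_norm hbound ?_
  simpa using ((tendsto_pow_atTop_nhds_zero_of_lt_one (abs_nonneg c) hc).comp
    (Nat.tendsto_div_const_atTop hk)).const_mul (∑ j ∈ Finset.range k, |f j|)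

theorem cfConvergesTo_of_tendsto {a : ℕ → ℝ} {ξ : ℝ} (hQ : ∀ᶠ n in atTop, cfQ a n ≠ 0)
    (h : Tendsto (fun n => cfP a n / cfQ a n) atTop (𝓝 ξ)) : CFConvergesTo a ξ :=
  ⟨eventually_atTop.1 ((tendsto_add_atTop_nat 1).eventually hQ), h.comp (tendsto_add_atTop_nat 1)⟩

/-- With `r = P - x Q` and `s = P - y Q`, one period multiplies `r / s` by
`(Pₘ - x Qₘ) / (Pₘ - y Qₘ)`, so `r / s → 0` and `P / Q = (x - y (r / s)) / (1 - r / s) → x`. -/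
theorem cfConvergesTo_of_periodic {a : ℕ → ℝ} {m : ℕ} (hper : ∀ n, a (n + (m + 1)) = a n)
    {x y : ℝ} (hx : cfQ a (m + 1) * x ^ 2 - (cfP a (m + 1) - cfQ a m) * x - cfP a m = 0)
    (hy : cfQ a (m + 1) * y ^ 2 - (cfP a (m + 1) - cfQ a m) * y - cfP a m = 0) (hxy : x ≠ y)
    (hlt : |cfP a (m + 1) - x * cfQ a (m + 1)| < |cfP a (m + 1) - y * cfQ a (m + 1)|)
    (hs : ∀ n, cfP a n - y * cfQ a n ≠ 0) : CFConvergesTo a x := by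
  set ρ : ℕ → ℝ := fun n => (cfP a n - x * cfQ a n) / (cfP a n - y * cfQ a n) with hρ_def
  have hden : cfP a (m + 1) - y * cfQ a (m + 1) ≠ 0 := abs_pos.1 ((abs_nonneg _).trans_lt hlt)
  have hρ_zero : Tendsto ρ atTop (𝓝 0) := by
    refine tendsto_zero_of_add_eq_mul m.succ_ne_zero (c := (cfP a (m + 1) - x * cfQ a (m + 1)) /
      (cfP a (m + 1) - y * cfQ a (m + 1))) ?_ fun n => ?_
    · rwa [abs_div, div_lt_one (abs_pos.2 hden)]
    · simp only [hρ_def, cfP_sub_mul_cfQ_add_period hper hx, cfP_sub_mul_cfQ_add_period hper hy]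
      field_simp
  have hρ_ne_one : ∀ᶠ n in atTop, ρ n ≠ 1 := hρ_zero.eventually_ne zero_ne_one
  have hQ : ∀ n, ρ n ≠ 1 → cfQ a n ≠ 0 := by
    intro n hn hQ
    refine hn ?_
    simp only [hρ_def, hQ, mul_zero, sub_zero]
    exact div_self (by simpa [hQ] using hs n)
  have hPQ : ∀ n, cfQ a n ≠ 0 → cfP a n / cfQ a n = (x - y * ρ n) / (1 - ρ n) := by
    intro n hQn
    have hsr : (cfP a n - y * cfQ a n) - (cfP a n - x * cfQ a n) ≠ 0 := by
      rw [show _ - _ = (x - y) * cfQ a n by ring]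
      exact mul_ne_zero (sub_ne_zero.2 hxy) hQn
    rw [hρ_def, one_sub_div (hs n), ← mul_div_assoc, sub_div' (hs n),
      div_div_div_cancel_right₀ (hs n), div_eq_div_iff hQn hsr]
    ring
  refine cfConvergesTo_of_tendsto (hρ_ne_one.mono hQ) ?_
  have hlim : Tendsto (fun n => (x - y * ρ n) / (1 - ρ n)) atTop (𝓝 ((x - y * 0) / (1 - 0))) :=
    (tendsto_const_nhds.sub (hρ_zero.const_mul y)).div (tendsto_const_nhds.sub hρ_zero) (by simp)
  rw [mul_zero, sub_zero, sub_zero, div_one] at hlim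
  exact hlim.congr' (hρ_ne_one.mono fun n hn => (hPQ n (hQ n hn)).symm)

theorem exists_roots_abs_sub_mul_lt {p p' q q' : ℝ} (hq : q ≠ 0) (ht : p + q' ≠ 0)
    (hD : 0 < (p - q') ^ 2 + 4 * q * p') :
    ∃ x y, x ≠ y ∧ q * x ^ 2 - (p - q') * x - p' = 0 ∧ q * y ^ 2 - (p - q') * y - p' = 0 ∧
      |p - x * q| < |p - y * q| := by
  set s := √((p - q') ^ 2 + 4 * q * p')
  have hs2 : s ^ 2 = (p - q') ^ 2 + 4 * q * p' := Real.sq_sqrt hD.le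
  have hs : s ≠ 0 := (Real.sqrt_pos.2 hD).ne'
  have hroot : ∀ σ : ℝ, σ ^ 2 = (p - q') ^ 2 + 4 * q * p' →
      q * ((p - q' + σ) / (2 * q)) ^ 2 - (p - q') * ((p - q' + σ) / (2 * q)) - p' = 0 := by
    intro σ hσ
    field_simp
    linear_combination hσ
  have hval : ∀ σ : ℝ, p - (p - q' + σ) / (2 * q) * q = (p + q' - σ) / 2 := by
    intro σ
    field_simp
    ring
  have hne : (p - q' + s) / (2 * q) ≠ (p - q' + -s) / (2 * q) := by
    intro h
    field_simp at h
    exact hs (by linarith)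
  have habs : |p - (p - q' + s) / (2 * q) * q| ≠ |p - (p - q' + -s) / (2 * q) * q| := by
    rw [hval, hval]
    intro h
    rcases abs_eq_abs.1 h with h | h
    · exact hs (by linarith)
    · exact ht (by linarith)
  rcases habs.lt_or_gt with h | h
  · exact ⟨_, _, hne, hroot s hs2, hroot (-s) ((neg_sq s).trans hs2), h⟩
  · exact ⟨_, _, hne.symm, hroot (-s) ((neg_sq s).trans hs2), hroot s hs2, h⟩

theorem cfP_sub_mul_cfQ_ne_zero {K : Subfield ℝ} {a : ℕ → ℝ} (ha : ∀ n, a n ∈ K) {y : ℝ}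
    (hy : y ∉ K) (n : ℕ) : cfP a n - y * cfQ a n ≠ 0 := by
  intro h
  by_cases hQ : cfQ a n = 0
  · have hP : cfP a n = 0 := by simpa [hQ] using h
    exact (cfP_ne_zero_or_cfQ_ne_zero a n).elim (· hP) (· hQ)
  · refine hy ?_
    rw [show y = cfP a n / cfQ a n by field_simp; linarith]
    exact div_mem (cfP_mem ha n) (cfQ_mem ha n)

theorem exists_root_cfConvergesTo_of_mem {K : Subfield ℝ} {a : ℕ → ℝ} (ha : ∀ n, a n ∈ K)
    {m : ℕ} (hper : ∀ n, a (n + (m + 1)) = a n)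
    (hpos : 0 < (cfP a (m + 1) - cfQ a m) ^ 2 + 4 * cfQ a (m + 1) * cfP a m)
    (hns : ∀ z ∈ K, z ^ 2 ≠ (cfP a (m + 1) - cfQ a m) ^ 2 + 4 * cfQ a (m + 1) * cfP a m) :
    ∃ x, cfQ a (m + 1) * x ^ 2 - (cfP a (m + 1) - cfQ a m) * x - cfP a m = 0 ∧
      CFConvergesTo a x := by
  have hP := cfP_mem ha
  have hQ := cfQ_mem ha
  have hq : cfQ a (m + 1) ≠ 0 := fun h =>
    hns (cfP a (m + 1) - cfQ a m) (sub_mem (hP _) (hQ _)) (by rw [h]; ring)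
  have ht : cfP a (m + 1) + cfQ a m ≠ 0 := by
    intro h
    have hdisc := cf_discriminant_eq a m
    rw [h] at hdisc
    rcases neg_one_pow_eq_or ℝ m with h1 | h1
    · exact hns 2 (ofNat_mem K 2) (by rw [hdisc, h1]; norm_num)
    · rw [hdisc, h1] at hpos
      norm_num at hpos
  have hroot_not_mem : ∀ y, cfQ a (m + 1) * y ^ 2 - (cfP a (m + 1) - cfQ a m) * y - cfP a m = 0 →
      y ∉ K := fun y hy hyK =>
    hns (2 * cfQ a (m + 1) * y - (cfP a (m + 1) - cfQ a m))
      (sub_mem (mul_mem (mul_mem (ofNat_mem K 2) (hQ _)) hyK) (sub_mem (hP _) (hQ _)))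
      (by linear_combination 4 * cfQ a (m + 1) * hy)
  obtain ⟨x, y, hxy, hx, hy, hlt⟩ := exists_roots_abs_sub_mul_lt hq ht hpos
  exact ⟨x, hx, cfConvergesTo_of_periodic hper hx hy hxy hlt
    (cfP_sub_mul_cfQ_ne_zero ha (hroot_not_mem y hy))⟩

theorem exists_root_cfConvergesTo (K : Subfield ℝ) (m : ℕ) (a : ℕ → K)
    (hper : ∀ n, a (n + (m + 1)) = a n)
    (hpos : 0 < (((cfP a (m + 1) - cfQ a m) ^ 2 + 4 * cfQ a (m + 1) * cfP a m : K) : ℝ))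
    (hns : ¬∃ y : K, y ^ 2 = (cfP a (m + 1) - cfQ a m) ^ 2 + 4 * cfQ a (m + 1) * cfP a m) :
    ∃ x : ℝ, (↑(cfQ a (m + 1)) : ℝ) * x ^ 2 - (↑(cfP a (m + 1) - cfQ a m) : ℝ) * x -
        (↑(cfP a m) : ℝ) = 0 ∧ CFConvergesTo (fun n => (a n : ℝ)) x := by
  have hP : ∀ n, ((cfP a n : K) : ℝ) = cfP (fun i => (a i : ℝ)) n := map_cfP K.subtype a
  have hQ : ∀ n, ((cfQ a n : K) : ℝ) = cfQ (fun i => (a i : ℝ)) n := map_cfQ K.subtype a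
  obtain ⟨x, hx, hconv⟩ := exists_root_cfConvergesTo_of_mem (K := K) (a := fun n => (a n : ℝ))
    (fun n => (a n).2) (fun n => congrArg _ (hper n)) (by push_cast [← hP, ← hQ]; exact hpos)
    fun z hz hsq => hns ⟨⟨z, hz⟩, Subtype.ext (by push_cast [hP, hQ]; exact hsq)⟩
  refine ⟨x, ?_, hconv⟩
  push_cast [hP, hQ]
  exact hx

theorem purely_periodic_and_reversed_converge_general
    (K : Subfield ℝ)
    (m : ℕ) (α : ℕ → K)
    (b c : ℕ → K)
    (hb : ∀ n, b n = α (n % (m + 1)))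
    (hc : ∀ n, c n = α (m - n % (m + 1)))
    (Δ : K)
    (hΔ : Δ = (cfP b (m + 1) - cfQ b m) ^ 2 + 4 * cfQ b (m + 1) * cfP b m)
    (hΔpos : 0 < (↑Δ : ℝ)) (hΔns : ¬∃ y : K, y ^ 2 = Δ) :
    (∃ x : ℝ, (↑(cfQ b (m + 1)) : ℝ) * x ^ 2 -
        (↑(cfP b (m + 1) - cfQ b m : ↥K) : ℝ) * x - (↑(cfP b m) : ℝ) = 0 ∧
      CFConvergesTo (fun n => (b n : ℝ)) x) ∧
    (∃ x : ℝ, -(↑(cfP b m) : ℝ) * x ^ 2 +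
        (↑(cfP b (m + 1) - cfQ b m : ↥K) : ℝ) * x + (↑(cfQ b (m + 1)) : ℝ) = 0 ∧
      CFConvergesTo (fun n => (c n : ℝ)) x) := by
  subst hΔ
  have hbper : ∀ n, b (n + (m + 1)) = b n := fun n => by rw [hb, hb, Nat.add_mod_right]
  have hcper : ∀ n, c (n + (m + 1)) = c n := fun n => by rw [hc, hc, Nat.add_mod_right]
  have hcb : ∀ i ≤ m, c i = b (m - i) := fun i hi => by
    rw [hc, hb, Nat.mod_eq_of_lt (by omega), Nat.mod_eq_of_lt (by omega)]
  obtain ⟨hP₁, hQ₁, hP₀, hQ₀⟩ := continuants_of_reverse hcb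
  have hdisc : (cfP c (m + 1) - cfQ c m) ^ 2 + 4 * cfQ c (m + 1) * cfP c m =
      (cfP b (m + 1) - cfQ b m) ^ 2 + 4 * cfQ b (m + 1) * cfP b m := by
    rw [hP₁, hQ₁, hP₀, hQ₀]
    ring
  obtain ⟨x, hx, hconv⟩ := exists_root_cfConvergesTo K m c hcper (hdisc ▸ hΔpos) (hdisc ▸ hΔns)
  refine ⟨exists_root_cfConvergesTo K m b hbper hΔpos hΔns, x, ?_, hconv⟩
  rw [hP₁, hQ₁, hP₀, hQ₀] at hx
  linear_combination -hx

/-- a purely periodic continued fraction `[overline(α₀,…,α_m)]` with positive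
non-square discriminant converges to a root of `q_m x² − (p_m − q_{m−1})x − p_{m−1} = 0`,
and its reversal `[overline(α_m,…,α₀)]` converges to a root of
`−p_{m−1} x² + (p_m − q_{m−1})x + q_m = 0`. -/
theorem purely_periodic_and_reversed_converge
    (K : Subfield ℝ) (hK : Module.finrank ℚ K = 2)
    (m : ℕ) (α : ℕ → K) (hα : ∀ i ≤ m, IsIntegral ℤ (α i))
    (b c : ℕ → K)
    (hb : ∀ n, b n = α (n % (m + 1)))
    (hc : ∀ n, c n = α (m - n % (m + 1)))
    (Δ : K)
    (hΔ : Δ = (cfP b (m + 1) - cfQ b m) ^ 2 + 4 * cfQ b (m + 1) * cfP b m)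
    (hΔpos : 0 < (↑Δ : ℝ)) (hΔns : ¬∃ y : K, y ^ 2 = Δ) :
    (∃ x : ℝ, (↑(cfQ b (m + 1)) : ℝ) * x ^ 2 -
        (↑(cfP b (m + 1) - cfQ b m : ↥K) : ℝ) * x - (↑(cfP b m) : ℝ) = 0 ∧
      CFConvergesTo (fun n => (b n : ℝ)) x) ∧
    (∃ x : ℝ, -(↑(cfP b m) : ℝ) * x ^ 2 +
        (↑(cfP b (m + 1) - cfQ b m : ↥K) : ℝ) * x + (↑(cfQ b (m + 1)) : ℝ) = 0 ∧
      CFConvergesTo (fun n => (c n : ℝ)) x) :=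
  purely_periodic_and_reversed_converge_general K m α b c hb hc Δ hΔ hΔpos hΔns
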